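/- arXiv:1008.2504 — 2 statements merged into one kernel-verified Lean document; each statement's English description precedes it below -/
import Mathlib

section
/- For each n ≥ 0, let τ : C_n → C_n (where C_n = B^{⊗(n+1)} ⊗ A) be the k-linear map defined on pure tensors by τ(b₀⊗⋯⊗b_n⊗a) = σ((b₀⊗⋯⊗b_{n−1}) ⊗ R(b_n ⊗ a)), where σ moves the last tensor factor (lying in B) to the front; explicitly, writing R(b_n ⊗ a) = Σ a^R ⊗ b_n^R, τ(b₀,…,b_n | a) = Σ (b_n^R, b₀,…,b_{n−1} | a^R). Then for every x ∈ C_n, the element τ^{n+1}(x) − x lies in the subspace span{ a·y − y·a : a ∈ A, y ∈ C_n } of C_n, where a·y and y·a denote the left and right A-actions on C_n. In particular τ induces an operator of order n+1 on the coinvariant space C_n^A = C_n / span{a·y − y·a}. -/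
/-! Let `Φ_n = R_{1,2} ∘ ⋯ ∘ R_{n+1,n+2}`, which carries the `A`-factor of `C_n` to the front.
Following one factor `b` of `C_{n+1}` through the iteration of `τ`: a factor in position `j ≤ n` is
moved to position `j + 1` while `τ` acts on the others, so after `n + 1` steps `b` is last, and the
next step passes it through `A` with `R`. By induction `τ^{n+1} = flip ∘ Φ_n`, where `flip` swaps
the two tensor factors. Since `Γ_n` inverts `Φ_n` and
`Γ_n(a ⊗ w) - flip(a ⊗ w) = a · (w ⊗ 1) - (w ⊗ 1) · a`, the element
`τ^{n+1}x - x = -(Γ_n(Φ_n x) - flip(Φ_n x))` is a sum of commutators. -/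

open TensorProduct

/-- A linear map `R : B ⊗ A → A ⊗ B` is *quasitriangular* if
`R∘(m_B ⊗ id_A) = (id_A ⊗ m_B)∘(R ⊗ id_B)∘(id_B ⊗ R)` and
`R∘(id_B ⊗ m_A) = (m_A ⊗ id_B)∘(id_A ⊗ R)∘(R ⊗ id_A)`,
with the evident associators inserted. -/
def Quasitriangular (k A B : Type) [Field k] [Ring A] [Algebra k A] [Ring B] [Algebra k B]
    (R : B ⊗[k] A →ₗ[k] A ⊗[k] B) : Prop :=
  (R ∘ₗ LinearMap.rTensor A (LinearMap.mul' k B)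
      = LinearMap.lTensor A (LinearMap.mul' k B)
        ∘ₗ (TensorProduct.assoc k A B B).toLinearMap
        ∘ₗ LinearMap.rTensor B R
        ∘ₗ (TensorProduct.assoc k B A B).symm.toLinearMap
        ∘ₗ LinearMap.lTensor B R
        ∘ₗ (TensorProduct.assoc k B B A).toLinearMap)
  ∧ (R ∘ₗ LinearMap.lTensor B (LinearMap.mul' k A)
      = LinearMap.rTensor B (LinearMap.mul' k A)
        ∘ₗ (TensorProduct.assoc k A A B).symm.toLinearMap
        ∘ₗ LinearMap.lTensor A R
        ∘ₗ (TensorProduct.assoc k A B A).toLinearMap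
        ∘ₗ LinearMap.rTensor A R
        ∘ₗ (TensorProduct.assoc k B A A).symm.toLinearMap)

/-- A linear map `R : B ⊗ A → A ⊗ B` is *normal* if `R(1_B ⊗ a) = a ⊗ 1_B` and
`R(b ⊗ 1_A) = 1_A ⊗ b`. -/
def RNormal (k A B : Type) [Field k] [Ring A] [Algebra k A] [Ring B] [Algebra k B]
    (R : B ⊗[k] A →ₗ[k] A ⊗[k] B) : Prop :=
  (∀ a : A, R ((1 : B) ⊗ₜ[k] a) = a ⊗ₜ[k] (1 : B))
  ∧ (∀ b : B, R (b ⊗ₜ[k] (1 : A)) = (1 : A) ⊗ₜ[k] b)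

variable (k : Type) [Field k]

/-- `Tpow k M n` is the `(n+1)`-fold tensor power `M ⊗ M ⊗ ⋯ ⊗ M`. -/
noncomputable def Tpow (M : ModuleCat.{0} k) : ℕ → ModuleCat.{0} k
  | 0 => M
  | (n+1) => ModuleCat.of k (↥M ⊗[k] ↥(Tpow M n))

/-- moving the last tensor factor out: `M^{⊗(n+2)} ≃ M^{⊗(n+1)} ⊗ M`. -/
noncomputable def ePow (M : ModuleCat.{0} k) : ∀ n : ℕ,
    (↥(Tpow k M (n+1)) ≃ₗ[k] ↥(Tpow k M n) ⊗[k] ↥M)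
  | 0 => LinearEquiv.refl k (↥M ⊗[k] ↥M)
  | (n+1) => (TensorProduct.congr (LinearEquiv.refl k ↥M) (ePow M n)).trans
      (TensorProduct.assoc k ↥M ↥(Tpow k M n) ↥M).symm

variable (A B : Type) [Ring A] [Algebra k A] [Ring B] [Algebra k B]

/-- The `(q+1)`-fold tensor power of `A`. -/
noncomputable abbrev TA (q : ℕ) : Type := ↥(Tpow k (ModuleCat.of k A) q)
/-- The `(p+1)`-fold tensor power of `B`. -/
noncomputable abbrev TB (p : ℕ) : Type := ↥(Tpow k (ModuleCat.of k B) p)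

variable {k A B}

/-- `Θ_q = R_{q+1,q+2} ∘ ⋯ ∘ R_{2,3} ∘ R_{1,2} : B ⊗ A^{⊗(q+1)} → A^{⊗(q+1)} ⊗ B`. -/
noncomputable def Theta (R : B ⊗[k] A →ₗ[k] A ⊗[k] B) :
    ∀ q : ℕ, (B ⊗[k] TA k A q) →ₗ[k] (TA k A q ⊗[k] B)
  | 0 => R
  | (q+1) =>
      (TensorProduct.assoc k A (TA k A q) B).symm.toLinearMap
      ∘ₗ LinearMap.lTensor A (Theta R q)
      ∘ₗ (TensorProduct.assoc k A B (TA k A q)).toLinearMap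
      ∘ₗ LinearMap.rTensor (TA k A q) R
      ∘ₗ (TensorProduct.assoc k B A (TA k A q)).symm.toLinearMap

/-- `Γ_p = R⁻¹_{p+1,p+2} ∘ ⋯ ∘ R⁻¹_{2,3} ∘ R⁻¹_{1,2} : A ⊗ B^{⊗(p+1)} → B^{⊗(p+1)} ⊗ A`. -/
noncomputable def Gamma (Ri : A ⊗[k] B →ₗ[k] B ⊗[k] A) :
    ∀ p : ℕ, (A ⊗[k] TB k B p) →ₗ[k] (TB k B p ⊗[k] A)
  | 0 => Ri
  | (p+1) =>
      (TensorProduct.assoc k B (TB k B p) A).symm.toLinearMap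
      ∘ₗ LinearMap.lTensor B (Gamma Ri p)
      ∘ₗ (TensorProduct.assoc k B A (TB k B p)).toLinearMap
      ∘ₗ LinearMap.rTensor (TB k B p) Ri
      ∘ₗ (TensorProduct.assoc k A B (TB k B p)).symm.toLinearMap

/-- The paracyclic operator `t_{p,q} = σ ∘ (id_B^{⊗p} ⊗ Θ_q)` on `B^{⊗(p+1)} ⊗ A^{⊗(q+1)}`,
where `σ` cyclically moves the last tensor factor (which lies in `B`) to the front. -/
noncomputable def tOp (R : B ⊗[k] A →ₗ[k] A ⊗[k] B) :
    ∀ (p q : ℕ), (TB k B p ⊗[k] TA k A q) →ₗ[k] (TB k B p ⊗[k] TA k A q)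
  | 0, q => (TensorProduct.comm k (TA k A q) B).toLinearMap ∘ₗ Theta R q
  | (p+1), q =>
      (TensorProduct.assoc k B (TB k B p) (TA k A q)).symm.toLinearMap
      ∘ₗ (TensorProduct.comm k (TB k B p ⊗[k] TA k A q) B).toLinearMap
      ∘ₗ (TensorProduct.assoc k (TB k B p) (TA k A q) B).symm.toLinearMap
      ∘ₗ LinearMap.lTensor (TB k B p) (Theta R q)
      ∘ₗ (TensorProduct.assoc k (TB k B p) B (TA k A q)).toLinearMap
      ∘ₗ LinearMap.rTensor (TA k A q) (ePow k (ModuleCat.of k B) p).toLinearMap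

/-- The paracyclic operator `t̄_{p,q}` on `B^{⊗(p+1)} ⊗ A^{⊗(q+1)}`, given by
`t̄(b₀⊗⋯⊗b_p⊗a₀⊗⋯⊗a_q) = Γ_p(a_q ⊗ b₀⊗⋯⊗b_p) ⊗ a₀⊗⋯⊗a_{q−1}`. -/
noncomputable def tbarOp (Ri : A ⊗[k] B →ₗ[k] B ⊗[k] A) :
    ∀ (p q : ℕ), (TB k B p ⊗[k] TA k A q) →ₗ[k] (TB k B p ⊗[k] TA k A q)
  | p, 0 => Gamma Ri p ∘ₗ (TensorProduct.comm k (TB k B p) A).toLinearMap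
  | p, (q+1) =>
      (TensorProduct.assoc k (TB k B p) A (TA k A q)).toLinearMap
      ∘ₗ LinearMap.rTensor (TA k A q) (Gamma Ri p)
      ∘ₗ (TensorProduct.assoc k A (TB k B p) (TA k A q)).symm.toLinearMap
      ∘ₗ (TensorProduct.comm k (TB k B p ⊗[k] TA k A q) A).toLinearMap
      ∘ₗ (TensorProduct.assoc k (TB k B p) (TA k A q) A).symm.toLinearMap
      ∘ₗ LinearMap.lTensor (TB k B p) (ePow k (ModuleCat.of k A) q).toLinearMap

/-- The left `A`-action `a · (b₀⊗⋯⊗b_n⊗a₀) = (id^{⊗(n+1)} ⊗ m_A)(Γ_n(a ⊗ b₀⊗⋯⊗b_n) ⊗ a₀)`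
on `C_n = B^{⊗(n+1)} ⊗ A`, as a linear map `A ⊗ C_n → C_n`. -/
noncomputable def leftAct {k A B : Type} [Field k] [Ring A] [Algebra k A] [Ring B] [Algebra k B]
    (Ri : A ⊗[k] B →ₗ[k] B ⊗[k] A) (n : ℕ) :
    (A ⊗[k] (TB k B n ⊗[k] A)) →ₗ[k] (TB k B n ⊗[k] A) :=
  LinearMap.lTensor (TB k B n) (LinearMap.mul' k A)
  ∘ₗ (TensorProduct.assoc k (TB k B n) A A).toLinearMap
  ∘ₗ LinearMap.rTensor A (Gamma Ri n)
  ∘ₗ (TensorProduct.assoc k A (TB k B n) A).symm.toLinearMap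

/-- The right `A`-action `(b₀⊗⋯⊗b_n⊗a₀) · a = b₀⊗⋯⊗b_n⊗(a₀a)` on `C_n = B^{⊗(n+1)} ⊗ A`,
as a linear map `C_n ⊗ A → C_n`. -/
noncomputable def rightAct {k A B : Type} [Field k] [Ring A] [Algebra k A] [Ring B] [Algebra k B]
    (n : ℕ) : ((TB k B n ⊗[k] A) ⊗[k] A) →ₗ[k] (TB k B n ⊗[k] A) :=
  LinearMap.lTensor (TB k B n) (LinearMap.mul' k A)
  ∘ₗ (TensorProduct.assoc k (TB k B n) A A).toLinearMap

/-- The operator `τ` on `C_n = B^{⊗(n+1)} ⊗ A`, defined on pure tensors by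
`τ(b₀,…,b_n | a) = Σ (b_n^R, b₀,…,b_{n−1} | a^R)` where `R(b_n ⊗ a) = Σ a^R ⊗ b_n^R`. -/
noncomputable def tauOp {k A B : Type} [Field k] [Ring A] [Algebra k A] [Ring B] [Algebra k B]
    (R : B ⊗[k] A →ₗ[k] A ⊗[k] B) :
    ∀ n : ℕ, (TB k B n ⊗[k] A) →ₗ[k] (TB k B n ⊗[k] A)
  | 0 => (TensorProduct.comm k A B).toLinearMap ∘ₗ R
  | (n+1) =>
      LinearMap.rTensor A (TensorProduct.comm k (TB k B n) B).toLinearMap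
      ∘ₗ (TensorProduct.assoc k (TB k B n) B A).symm.toLinearMap
      ∘ₗ LinearMap.lTensor (TB k B n) (TensorProduct.comm k A B).toLinearMap
      ∘ₗ LinearMap.lTensor (TB k B n) R
      ∘ₗ (TensorProduct.assoc k (TB k B n) B A).toLinearMap
      ∘ₗ LinearMap.rTensor A (ePow k (ModuleCat.of k B) n).toLinearMap

-- Lets instance search and `rw` see `Tpow k M (n+1)` as `M ⊗ Tpow k M n`.
attribute [reducible] Tpow

namespace Tpow

variable {k : Type} [Field k] {M : ModuleCat.{0} k}

variable (M) in
/-- `insertAt M n j m` inserts `m` as the new factor in position `j` (counting from `0`) of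
`M^{⊗(n+1)}`; positions `j > n + 1` act like `n + 1`. -/
noncomputable def insertAt : (n : ℕ) → ℕ → M → (Tpow k M n →ₗ[k] Tpow k M (n+1))
  | _, 0, m => TensorProduct.mk k M _ m
  | 0, _+1, m => (TensorProduct.mk k M M).flip m
  | n+1, j+1, m => LinearMap.lTensor M (insertAt n j m)

lemma insertAt_zero (n : ℕ) (m : M) : insertAt M n 0 m = TensorProduct.mk k M _ m := by
  cases n <;> rfl

lemma ePow_succ_tmul (n : ℕ) (m : M) (t : Tpow k M (n+1)) :
    ePow k M (n+1) (m ⊗ₜ t) = (TensorProduct.assoc k M (Tpow k M n) M).symm (m ⊗ₜ ePow k M n t) :=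
  rfl

lemma ePow_insertAt_last (m : M) :
    ∀ n (t : Tpow k M n), ePow k M n (insertAt M n (n+1) m t) = t ⊗ₜ m
  | 0, _ => rfl
  | n+1, t => by
      induction t using TensorProduct.induction_on with
      | zero => simp
      | tmul c t =>
        rw [insertAt, LinearMap.lTensor_tmul, ePow_succ_tmul, ePow_insertAt_last m n t]
        rfl
      | add s t hs ht => simp [hs, ht, TensorProduct.add_tmul]

lemma ePow_succ_comp_insertAt (m : M) :
    ∀ n j, j ≤ n + 1 →
      (ePow k M (n+1)).toLinearMap ∘ₗ insertAt M (n+1) j m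
        = LinearMap.rTensor M (insertAt M n j m) ∘ₗ (ePow k M n).toLinearMap
  | n, 0, _ => LinearMap.ext fun t => by
      rw [LinearMap.comp_apply, LinearMap.comp_apply, insertAt_zero, insertAt_zero,
        TensorProduct.mk_apply, LinearEquiv.coe_coe, LinearEquiv.coe_coe, ePow_succ_tmul]
      induction ePow k M n t using TensorProduct.induction_on with
      | zero => simp
      | tmul c t => rfl
      | add s t hs ht => simp [TensorProduct.tmul_add, hs, ht]
  | 0, 1, _ => TensorProduct.ext' fun _ _ => rfl
  | 0, _+2, hj => by omega
  | n+1, j+1, hj => TensorProduct.ext' fun c t => by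
      have ih := LinearMap.congr_fun (ePow_succ_comp_insertAt m n j (by omega)) t
      simp only [LinearMap.comp_apply, LinearEquiv.coe_coe] at ih ⊢
      rw [insertAt, LinearMap.lTensor_tmul, ePow_succ_tmul, ePow_succ_tmul, ih]
      exact (LinearMap.congr_fun
        (LinearMap.rTensor_lTensor_comp_assoc_symm (x := insertAt M n j m))
        (c ⊗ₜ ePow k M n t)).symm

end Tpow

section Rotation

variable {k A B : Type} [Field k] [AddCommMonoid A] [Module k A] [AddCommMonoid B] [Module k B]
  (R : B ⊗[k] A →ₗ[k] A ⊗[k] B)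

/-- `(v ⊗ c) ⊗ a ↦ Σ (c^R ⊗ v) ⊗ a^R`, where `R(c ⊗ a) = Σ a^R ⊗ c^R`. -/
noncomputable def rotateLast (V : Type) [AddCommMonoid V] [Module k V] :
    (V ⊗[k] B) ⊗[k] A →ₗ[k] (B ⊗[k] V) ⊗[k] A :=
  LinearMap.rTensor A (TensorProduct.comm k V B).toLinearMap
  ∘ₗ (TensorProduct.assoc k V B A).symm.toLinearMap
  ∘ₗ LinearMap.lTensor V (TensorProduct.comm k A B).toLinearMap
  ∘ₗ LinearMap.lTensor V R
  ∘ₗ (TensorProduct.assoc k V B A).toLinearMap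

lemma rotateLast_comp_rTensor_rTensor {V W : Type} [AddCommMonoid V] [Module k V]
    [AddCommMonoid W] [Module k W] (f : V →ₗ[k] W) :
    rotateLast R W ∘ₗ LinearMap.rTensor A (LinearMap.rTensor B f)
      = LinearMap.rTensor A (LinearMap.lTensor B f) ∘ₗ rotateLast R V := by
  refine TensorProduct.ext_threefold fun v c a => ?_
  simp only [rotateLast, LinearMap.comp_apply, LinearMap.rTensor_tmul, LinearEquiv.coe_coe,
    TensorProduct.assoc_tmul, LinearMap.lTensor_tmul]
  induction R (c ⊗ₜ a) using TensorProduct.induction_on with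
  | zero => simp
  | tmul a' c' => simp
  | add s t hs ht => simp only [map_add, TensorProduct.tmul_add, hs, ht]

end Rotation

section Paracyclic

variable {k A B : Type} [Field k] [Ring A] [Algebra k A] [Ring B] [Algebra k B]
  (R : B ⊗[k] A →ₗ[k] A ⊗[k] B)

/-- `Φ_n = R_{1,2} ∘ ⋯ ∘ R_{n+1,n+2} : B^{⊗(n+1)} ⊗ A → A ⊗ B^{⊗(n+1)}`. -/
noncomputable def Phi : ∀ n : ℕ, (TB k B n ⊗[k] A) →ₗ[k] (A ⊗[k] TB k B n)
  | 0 => R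
  | n+1 =>
      (TensorProduct.assoc k A B (TB k B n)).toLinearMap
      ∘ₗ LinearMap.rTensor (TB k B n) R
      ∘ₗ (TensorProduct.assoc k B A (TB k B n)).symm.toLinearMap
      ∘ₗ LinearMap.lTensor B (Phi n)
      ∘ₗ (TensorProduct.assoc k B (TB k B n) A).toLinearMap

lemma tauOp_succ (n : ℕ) :
    tauOp R (n+1)
      = rotateLast R (TB k B n) ∘ₗ LinearMap.rTensor A (ePow k (ModuleCat.of k B) n).toLinearMap :=
  rfl

lemma tauOp_succ_comp_insertAt (b : B) :
    ∀ n j, j ≤ n →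
      tauOp R (n+1) ∘ₗ LinearMap.rTensor A (Tpow.insertAt (ModuleCat.of k B) n j b)
        = LinearMap.rTensor A (Tpow.insertAt (ModuleCat.of k B) n (j+1) b) ∘ₗ tauOp R n
  | 0, 0, _ => TensorProduct.ext' fun c a => by
      change rotateLast R B ((b ⊗ₜ c) ⊗ₜ a)
        = LinearMap.rTensor A ((TensorProduct.mk k B B).flip b)
            (TensorProduct.comm k A B (R (c ⊗ₜ a)))
      simp only [rotateLast, LinearMap.comp_apply, LinearEquiv.coe_coe, TensorProduct.assoc_tmul,
        LinearMap.lTensor_tmul]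
      induction R (c ⊗ₜ a) using TensorProduct.induction_on with
      | zero => simp
      | tmul a' c' => simp
      | add s t hs ht => simp only [map_add, TensorProduct.tmul_add, hs, ht]
  | n+1, j, hj => by
      rw [tauOp_succ, tauOp_succ, LinearMap.comp_assoc, ← LinearMap.rTensor_comp,
        Tpow.ePow_succ_comp_insertAt (M := ModuleCat.of k B) b n j hj, LinearMap.rTensor_comp,
        ← LinearMap.comp_assoc, rotateLast_comp_rTensor_rTensor, LinearMap.comp_assoc]
      rfl

lemma tauOp_succ_insertAt_last (b : B) (n : ℕ) (y : A ⊗[k] TB k B n) :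
    tauOp R (n+1)
        (LinearMap.rTensor A (Tpow.insertAt (ModuleCat.of k B) n (n+1) b)
          (TensorProduct.comm k A (TB k B n) y))
      = TensorProduct.comm k A (TB k B (n+1))
          (TensorProduct.assoc k A B (TB k B n)
            (LinearMap.rTensor (TB k B n) R
              ((TensorProduct.assoc k B A (TB k B n)).symm (b ⊗ₜ y)))) := by
  induction y using TensorProduct.induction_on with
  | zero => simp
  | tmul a t =>
      rw [tauOp_succ]
      simp only [LinearMap.comp_apply, TensorProduct.comm_tmul, LinearMap.rTensor_tmul,
        LinearEquiv.coe_coe, TensorProduct.assoc_symm_tmul]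
      rw [Tpow.ePow_insertAt_last (M := ModuleCat.of k B)]
      simp only [rotateLast, LinearMap.comp_apply, LinearEquiv.coe_coe, TensorProduct.assoc_tmul,
        LinearMap.lTensor_tmul]
      induction R (b ⊗ₜ a) using TensorProduct.induction_on with
      | zero => simp
      | tmul a' c' => simp
      | add s t hs ht =>
        simp only [map_add, TensorProduct.tmul_add, TensorProduct.add_tmul, hs, ht]
  | add y z hy hz => simp only [map_add, TensorProduct.tmul_add, hy, hz]

lemma tauOp_pow_comp_insertAt (b : B) (n : ℕ) :
    ∀ m j, j + m ≤ n + 1 →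
      ((tauOp R (n+1) : Module.End k _) ^ m)
          ∘ₗ LinearMap.rTensor A (Tpow.insertAt (ModuleCat.of k B) n j b)
        = LinearMap.rTensor A (Tpow.insertAt (ModuleCat.of k B) n (j+m) b)
          ∘ₗ ((tauOp R n : Module.End k _) ^ m)
  | 0, j, _ => rfl
  | m+1, j, hjm => by
      rw [pow_succ, pow_succ, Module.End.mul_eq_comp, Module.End.mul_eq_comp,
        LinearMap.comp_assoc, tauOp_succ_comp_insertAt R b n j (by omega), ← LinearMap.comp_assoc,
        tauOp_pow_comp_insertAt b n m (j+1) (by omega), LinearMap.comp_assoc,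
        Nat.add_right_comm, add_assoc]

theorem tauOp_pow_succ :
    ∀ n, (tauOp R n : Module.End k (TB k B n ⊗[k] A)) ^ (n+1)
      = (TensorProduct.comm k A (TB k B n)).toLinearMap ∘ₗ Phi R n
  | 0 => pow_one _
  | n+1 => TensorProduct.ext_threefold fun b w a => by
      have hins : (b ⊗ₜ w) ⊗ₜ a
          = LinearMap.rTensor A (Tpow.insertAt (ModuleCat.of k B) n 0 b) (w ⊗ₜ[k] a) := by
        rw [Tpow.insertAt_zero]; rfl
      have hpow := LinearMap.congr_fun
        (tauOp_pow_comp_insertAt R b n (n+1) 0 (by omega)) (w ⊗ₜ[k] a)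
      rw [zero_add, LinearMap.comp_apply, LinearMap.comp_apply, tauOp_pow_succ n] at hpow
      rw [pow_succ', Module.End.mul_apply]
      conv_lhs => rw [hins, hpow]
      exact tauOp_succ_insertAt_last R b n _

end Paracyclic

section Coinvariants

variable {k A B : Type} [Field k] [Ring A] [Algebra k A] [Ring B] [Algebra k B]

lemma Gamma_comp_Phi {R : B ⊗[k] A →ₗ[k] A ⊗[k] B} {Ri : A ⊗[k] B →ₗ[k] B ⊗[k] A}
    (h : Ri ∘ₗ R = LinearMap.id) : ∀ n, Gamma Ri n ∘ₗ Phi R n = LinearMap.id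
  | 0 => h
  | n+1 => by
      simp only [Gamma, Phi, LinearMap.comp_assoc, LinearEquiv.symm_comp_assoc]
      rw [← LinearMap.comp_assoc _ (LinearMap.rTensor _ R), ← LinearMap.rTensor_comp, h,
        LinearMap.rTensor_id, LinearMap.id_comp, LinearEquiv.comp_symm_assoc,
        ← LinearMap.comp_assoc _ (LinearMap.lTensor _ (Phi R n)), ← LinearMap.lTensor_comp,
        Gamma_comp_Phi h n, LinearMap.lTensor_id, LinearMap.id_comp, LinearEquiv.symm_comp]

noncomputable def commutatorSpan (Ri : A ⊗[k] B →ₗ[k] B ⊗[k] A) (n : ℕ) :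
    Submodule k (TB k B n ⊗[k] A) :=
  Submodule.span k {y | ∃ (a : A) (z : TB k B n ⊗[k] A),
    y = leftAct Ri n (a ⊗ₜ[k] z) - rightAct n (z ⊗ₜ[k] a)}

lemma rightAct_tmul_one (n : ℕ) (z : TB k B n ⊗[k] A) : rightAct n (z ⊗ₜ[k] (1 : A)) = z := by
  induction z using TensorProduct.induction_on with
  | zero => simp
  | tmul w a => simp [rightAct]
  | add y z hy hz => simp only [TensorProduct.add_tmul, map_add, hy, hz]

lemma Gamma_sub_comm_mem_commutatorSpan (Ri : A ⊗[k] B →ₗ[k] B ⊗[k] A) (n : ℕ)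
    (u : A ⊗[k] TB k B n) :
    Gamma Ri n u - TensorProduct.comm k A (TB k B n) u ∈ commutatorSpan Ri n := by
  induction u using TensorProduct.induction_on with
  | zero => simp
  | tmul a w =>
      refine Submodule.subset_span ⟨a, w ⊗ₜ 1, ?_⟩
      rw [show leftAct Ri n (a ⊗ₜ (w ⊗ₜ 1)) = rightAct n (Gamma Ri n (a ⊗ₜ w) ⊗ₜ 1) from rfl,
        rightAct_tmul_one]
      simp [rightAct]
  | add u v hu hv => simpa only [map_add, add_sub_add_comm] using add_mem hu hv

end Coinvariants

theorem tau_pow_sub_id_mem_commutator_span_general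
    (k A B : Type) [Field k] [Ring A] [Algebra k A] [Ring B] [Algebra k B]
    (R : B ⊗[k] A ≃ₗ[k] A ⊗[k] B)
    (n : ℕ) (x : TB k B n ⊗[k] A) :
    ((tauOp R.toLinearMap n : Module.End k (TB k B n ⊗[k] A)) ^ (n+1)) x - x
      ∈ Submodule.span k
          {y : TB k B n ⊗[k] A | ∃ (a : A) (z : TB k B n ⊗[k] A),
            y = leftAct R.symm.toLinearMap n (a ⊗ₜ[k] z) - rightAct n (z ⊗ₜ[k] a)} := by
  have hx : Gamma R.symm.toLinearMap n (Phi R.toLinearMap n x) = x :=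
    LinearMap.congr_fun (Gamma_comp_Phi (LinearEquiv.symm_comp R) n) x
  have hcomm := Gamma_sub_comm_mem_commutatorSpan R.symm.toLinearMap n (Phi R.toLinearMap n x)
  rw [hx] at hcomm
  rw [tauOp_pow_succ, LinearMap.comp_apply, ← neg_sub]
  exact neg_mem hcomm

/-- For every `x ∈ C_n`, the element `τ^{n+1}(x) − x` lies in the subspace
`span{a·y − y·a}` of commutators for the `A`-bimodule structure on `C_n`; hence `τ` induces
an operator of order `n+1` on the coinvariant space `C_n^A`. -/
theorem tau_pow_sub_id_mem_commutator_span
    (k A B : Type) [Field k] [Ring A] [Algebra k A] [Ring B] [Algebra k B]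
    (R : B ⊗[k] A ≃ₗ[k] A ⊗[k] B)
    (hqt : Quasitriangular k A B R.toLinearMap)
    (hn : RNormal k A B R.toLinearMap)
    (n : ℕ) (x : TB k B n ⊗[k] A) :
    ((tauOp R.toLinearMap n : Module.End k (TB k B n ⊗[k] A)) ^ (n+1)) x - x
      ∈ Submodule.span k
          {y : TB k B n ⊗[k] A | ∃ (a : A) (z : TB k B n ⊗[k] A),
            y = leftAct R.symm.toLinearMap n (a ⊗ₜ[k] z) - rightAct n (z ⊗ₜ[k] a)} :=
  tau_pow_sub_id_mem_commutator_span_general k A B R n x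
end

section
/- Let (B, H) be a matched pair of Hopf algebras over a field k. Then the k-linear map R : H ⊗ B → B ⊗ H defined by R(h ⊗ b) = Σ (h₍₁₎ ▷ b₍₁₎) ⊗ (h₍₂₎ ◁ b₍₂₎) is quasitriangular and normal; that is, R∘(m_H ⊗ id_B) = (id_B ⊗ m_H)∘(R ⊗ id_H)∘(id_H ⊗ R) as maps H ⊗ H ⊗ B → B ⊗ H, R∘(id_H ⊗ m_B) = (m_B ⊗ id_H)∘(id_B ⊗ R)∘(R ⊗ id_B) as maps H ⊗ B ⊗ B → B ⊗ H, and R(1_H ⊗ b) = b ⊗ 1_H, R(h ⊗ 1_B) = 1_B ⊗ h for all h ∈ H, b ∈ B. -/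
open TensorProduct

section MatchedPair

variable (k B H : Type) [Field k] [Ring B] [HopfAlgebra k B] [Ring H] [HopfAlgebra k H]

/-- `(B, H)` is a *matched pair* of Hopf algebras: `B` is a left `H`-module coalgebra via
`actL` (`h ⊗ b ↦ h ▷ b`), `H` is a right `B`-module coalgebra via `actR` (`h ⊗ b ↦ h ◁ b`),
and the compatibility conditions of Majid hold. -/
structure MatchedPair (actL : H ⊗[k] B →ₗ[k] B) (actR : H ⊗[k] B →ₗ[k] H) : Prop where
  /-- `1_H ▷ b = b` -/
  one_actL : ∀ b : B, actL ((1 : H) ⊗ₜ[k] b) = b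
  /-- `(gh) ▷ b = g ▷ (h ▷ b)` -/
  mul_actL : ∀ (g h : H) (b : B), actL ((g * h) ⊗ₜ[k] b) = actL (g ⊗ₜ[k] actL (h ⊗ₜ[k] b))
  /-- `h ◁ 1_B = h` -/
  actR_unit : ∀ h : H, actR (h ⊗ₜ[k] (1 : B)) = h
  /-- `h ◁ (bc) = (h ◁ b) ◁ c` -/
  actR_mul' : ∀ (h : H) (b c : B), actR (h ⊗ₜ[k] (b * c)) = actR (actR (h ⊗ₜ[k] b) ⊗ₜ[k] c)
  /-- `Δ_B(h ▷ b) = Σ (h₍₁₎ ▷ b₍₁₎) ⊗ (h₍₂₎ ▷ b₍₂₎)` -/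
  comul_actL : Coalgebra.comul (R := k) ∘ₗ actL
    = TensorProduct.map actL actL
      ∘ₗ (TensorProduct.tensorTensorTensorComm k H H B B).toLinearMap
      ∘ₗ TensorProduct.map (Coalgebra.comul (R := k)) (Coalgebra.comul (R := k))
  /-- `ε_B(h ▷ b) = ε_H(h)ε_B(b)` -/
  counit_actL : Coalgebra.counit (R := k) ∘ₗ actL
    = (TensorProduct.lid k k).toLinearMap
      ∘ₗ TensorProduct.map (Coalgebra.counit (R := k)) (Coalgebra.counit (R := k))
  /-- `Δ_H(h ◁ b) = Σ (h₍₁₎ ◁ b₍₁₎) ⊗ (h₍₂₎ ◁ b₍₂₎)` -/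
  comul_actR : Coalgebra.comul (R := k) ∘ₗ actR
    = TensorProduct.map actR actR
      ∘ₗ (TensorProduct.tensorTensorTensorComm k H H B B).toLinearMap
      ∘ₗ TensorProduct.map (Coalgebra.comul (R := k)) (Coalgebra.comul (R := k))
  /-- `ε_H(h ◁ b) = ε_H(h)ε_B(b)` -/
  counit_actR : Coalgebra.counit (R := k) ∘ₗ actR
    = (TensorProduct.lid k k).toLinearMap
      ∘ₗ TensorProduct.map (Coalgebra.counit (R := k)) (Coalgebra.counit (R := k))
  /-- `h ▷ 1_B = ε_H(h)1_B` -/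
  actL_one : ∀ h : H, actL (h ⊗ₜ[k] (1 : B)) = Coalgebra.counit (R := k) h • (1 : B)
  /-- `1_H ◁ b = ε_B(b)1_H` -/
  one_actR : ∀ b : B, actR ((1 : H) ⊗ₜ[k] b) = Coalgebra.counit (R := k) b • (1 : H)
  /-- `h ▷ (bc) = Σ (h₍₁₎ ▷ b₍₁₎)((h₍₂₎ ◁ b₍₂₎) ▷ c)` -/
  actL_mul : actL ∘ₗ LinearMap.lTensor H (LinearMap.mul' k B)
    = LinearMap.mul' k B
      ∘ₗ TensorProduct.map actL
          (actL ∘ₗ LinearMap.rTensor B actR ∘ₗ (TensorProduct.assoc k H B B).symm.toLinearMap)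
      ∘ₗ (TensorProduct.tensorTensorTensorComm k H H B (B ⊗[k] B)).toLinearMap
      ∘ₗ LinearMap.lTensor (H ⊗[k] H) (TensorProduct.assoc k B B B).toLinearMap
      ∘ₗ LinearMap.rTensor ((B ⊗[k] B) ⊗[k] B) (Coalgebra.comul (R := k))
      ∘ₗ LinearMap.lTensor H (LinearMap.rTensor B (Coalgebra.comul (R := k)))
  /-- `(hg) ◁ b = Σ (h ◁ (g₍₁₎ ▷ b₍₁₎))(g₍₂₎ ◁ b₍₂₎)` -/
  mul_actR : actR ∘ₗ LinearMap.rTensor B (LinearMap.mul' k H)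
    = LinearMap.mul' k H
      ∘ₗ TensorProduct.map (actR ∘ₗ LinearMap.lTensor H actL) actR
      ∘ₗ (TensorProduct.assoc k H (H ⊗[k] B) (H ⊗[k] B)).symm.toLinearMap
      ∘ₗ LinearMap.lTensor H (TensorProduct.tensorTensorTensorComm k H H B B).toLinearMap
      ∘ₗ (TensorProduct.assoc k H (H ⊗[k] H) (B ⊗[k] B)).toLinearMap
      ∘ₗ LinearMap.rTensor (B ⊗[k] B) (LinearMap.lTensor H (Coalgebra.comul (R := k)))
      ∘ₗ LinearMap.lTensor (H ⊗[k] H) (Coalgebra.comul (R := k))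
  /-- `Σ (h₍₁₎ ◁ b₍₁₎) ⊗ (h₍₂₎ ▷ b₍₂₎) = Σ (h₍₂₎ ◁ b₍₂₎) ⊗ (h₍₁₎ ▷ b₍₁₎)` -/
  compat : TensorProduct.map actR actL
      ∘ₗ (TensorProduct.tensorTensorTensorComm k H H B B).toLinearMap
      ∘ₗ TensorProduct.map (Coalgebra.comul (R := k)) (Coalgebra.comul (R := k))
    = TensorProduct.map actR actL
      ∘ₗ (TensorProduct.tensorTensorTensorComm k H H B B).toLinearMap
      ∘ₗ TensorProduct.map
          ((TensorProduct.comm k H H).toLinearMap ∘ₗ Coalgebra.comul (R := k))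
          ((TensorProduct.comm k B B).toLinearMap ∘ₗ Coalgebra.comul (R := k))

end MatchedPair

/-- The map `R : H ⊗ B → B ⊗ H`, `R(h ⊗ b) = Σ (h₍₁₎ ▷ b₍₁₎) ⊗ (h₍₂₎ ◁ b₍₂₎)` associated to
a matched pair of Hopf algebras. -/
noncomputable def matchedPairR (k B H : Type) [Field k] [Ring B] [HopfAlgebra k B]
    [Ring H] [HopfAlgebra k H]
    (actL : H ⊗[k] B →ₗ[k] B) (actR : H ⊗[k] B →ₗ[k] H) :
    H ⊗[k] B →ₗ[k] B ⊗[k] H :=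
  TensorProduct.map actL actR
  ∘ₗ (TensorProduct.tensorTensorTensorComm k H H B B).toLinearMap
  ∘ₗ TensorProduct.map (Coalgebra.comul (R := k)) (Coalgebra.comul (R := k))

/-!
Let `C = H ⊗ B` carry the tensor product coalgebra structure. The axioms on `Δ(h ▷ b)` and
`Δ(h ◁ b)` say that `actL : C → B` and `actR : C → H` are coalgebra maps, and
`R = (actL ⊗ actR) ∘ Δ_C`. For `z = h ⊗ b`, the axiom for `(hg) ◁ b` turns `R(gh ⊗ b)` into
`Σ g₁ ▷ actL z₁ ⊗ (g₂ ◁ actL z₂₁) (actR z₂₂)`, while `Δ(actL z₁) = actL z₁₁ ⊗ actL z₁₂` turns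
`(id ⊗ m)(R ⊗ id)(g ⊗ R z)` into `Σ g₁ ▷ actL z₁₁ ⊗ (g₂ ◁ actL z₁₂) (actR z₂)`; these agree by
coassociativity of `Δ_C`. The second identity is the mirror image, with `c` in the role of `g`.
-/

open Coalgebra

namespace Coalgebra

variable {R A M : Type*} [CommSemiring R] [AddCommMonoid A] [Module R A] [Coalgebra R A]
  [AddCommMonoid M] [Module R M] {a : A} {ι : Type*} {κ Λ : ι → Type*}

theorem sum_counit_right_smul (ℛa : Repr R a ι) :
    ∑ i ∈ ℛa.index, counit (R := R) (ℛa.right i) • ℛa.left i = a := by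
  simpa only [map_sum, rid_tmul, one_smul] using
    congr(_root_.TensorProduct.rid R A $(sum_tmul_counit_eq ℛa))

theorem sum_apply_tmul_tmul_eq (Φ : A ⊗[R] (A ⊗[R] A) →ₗ[R] M) (ℛa : Repr R a ι)
    (a₁ : ∀ i, Repr R (ℛa.left i) (κ i)) (a₂ : ∀ i, Repr R (ℛa.right i) (Λ i)) :
    ∑ i ∈ ℛa.index, ∑ j ∈ (a₁ i).index,
      Φ ((a₁ i).left j ⊗ₜ[R] ((a₁ i).right j ⊗ₜ[R] ℛa.right i))
      = ∑ i ∈ ℛa.index, ∑ j ∈ (a₂ i).index,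
      Φ (ℛa.left i ⊗ₜ[R] ((a₂ i).left j ⊗ₜ[R] (a₂ i).right j)) := by
  simpa only [map_sum] using congr(Φ $(sum_tmul_tmul_eq ℛa a₁ a₂))

def Repr.one (R A : Type*) [CommSemiring R] [Semiring A] [Bialgebra R A] :
    Repr R (1 : A) Unit where
  index := {()}
  left _ := 1
  right _ := 1
  eq := by simp [Algebra.TensorProduct.one_def]

end Coalgebra

section matchedPairR

variable {k B H : Type} [Field k] [Ring B] [HopfAlgebra k B] [Ring H] [HopfAlgebra k H]
  {actL : H ⊗[k] B →ₗ[k] B} {actR : H ⊗[k] B →ₗ[k] H} {ι κ : Type*}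

theorem matchedPairR_eq_map_comp_comul :
    matchedPairR k B H actL actR = map actL actR ∘ₗ comul :=
  rfl

theorem matchedPairR_apply {z : H ⊗[k] B} (ℛz : Repr k z ι) :
    matchedPairR k B H actL actR z
      = ∑ w ∈ ℛz.index, actL (ℛz.left w) ⊗ₜ[k] actR (ℛz.right w) := by
  rw [matchedPairR_eq_map_comp_comul, LinearMap.comp_apply, ← ℛz.eq, map_sum]
  rfl

theorem matchedPairR_tmul {x : H} {y : B} (ℛx : Repr k x ι) (ℛy : Repr k y κ) :
    matchedPairR k B H actL actR (x ⊗ₜ y)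
      = ∑ i ∈ ℛx.index, ∑ j ∈ ℛy.index,
          actL (ℛx.left i ⊗ₜ ℛy.left j) ⊗ₜ[k] actR (ℛx.right i ⊗ₜ ℛy.right j) := by
  rw [matchedPairR_apply (ℛx.tmul ℛy), Repr.tmul_index, Finset.sum_product]
  rfl

end matchedPairR

namespace MatchedPair

variable {k B H : Type} [Field k] [Ring B] [HopfAlgebra k B] [Ring H] [HopfAlgebra k H]
  {actL : H ⊗[k] B →ₗ[k] B} {actR : H ⊗[k] B →ₗ[k] H} {ι κ : Type*}

noncomputable def actLCoalgHom (hmp : MatchedPair k B H actL actR) : H ⊗[k] B →ₗc[k] B where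
  toLinearMap := actL
  counit_comp := hmp.counit_actL.trans (by ext; simp [mul_comm])
  map_comp_comul := hmp.comul_actL.symm

@[simp]
theorem coe_actLCoalgHom (hmp : MatchedPair k B H actL actR) : ⇑hmp.actLCoalgHom = actL := rfl

noncomputable def actRCoalgHom (hmp : MatchedPair k B H actL actR) : H ⊗[k] B →ₗc[k] H where
  toLinearMap := actR
  counit_comp := hmp.counit_actR.trans (by ext; simp [mul_comm])
  map_comp_comul := hmp.comul_actR.symm

@[simp]
theorem coe_actRCoalgHom (hmp : MatchedPair k B H actL actR) : ⇑hmp.actRCoalgHom = actR := rfl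

theorem matchedPairR_one_tmul (hmp : MatchedPair k B H actL actR) (b : B) :
    matchedPairR k B H actL actR ((1 : H) ⊗ₜ b) = b ⊗ₜ (1 : H) := by
  rw [matchedPairR_tmul (Repr.one k H) (ℛ k b)]
  simp only [Repr.one, Finset.sum_singleton, hmp.one_actL, hmp.one_actR, ← smul_tmul]
  rw [← sum_tmul, sum_counit_right_smul]

theorem matchedPairR_tmul_one (hmp : MatchedPair k B H actL actR) (h : H) :
    matchedPairR k B H actL actR (h ⊗ₜ (1 : B)) = (1 : B) ⊗ₜ h := by
  rw [matchedPairR_tmul (ℛ k h) (Repr.one k B)]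
  simp only [Repr.one, Finset.sum_singleton, hmp.actL_one, hmp.actR_unit, smul_tmul,
    ← tmul_sum, sum_counit_smul]

theorem actR_mul_tmul (hmp : MatchedPair k B H actL actR) (x : H) {h : H} {b : B}
    (ℛz : Repr k (h ⊗ₜ[k] b) ι) :
    actR ((x * h) ⊗ₜ b) = ∑ w ∈ ℛz.index, actR (x ⊗ₜ actL (ℛz.left w)) * actR (ℛz.right w) := by
  have := LinearMap.congr_fun hmp.mul_actR ((x ⊗ₜ h) ⊗ₜ b)
  simp only [LinearMap.comp_apply, LinearMap.rTensor_tmul, LinearMap.lTensor_tmul,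
    LinearMap.mul'_apply, LinearEquiv.coe_coe, assoc_tmul] at this
  rw [this, show tensorTensorTensorComm k H H B B (comul h ⊗ₜ comul b) = comul (h ⊗ₜ[k] b)
    from rfl, ← ℛz.eq]
  simp [tmul_sum, map_sum]

theorem actL_tmul_mul (hmp : MatchedPair k B H actL actR) {h : H} {b : B} (c : B)
    (ℛz : Repr k (h ⊗ₜ[k] b) ι) :
    actL (h ⊗ₜ (b * c)) = ∑ w ∈ ℛz.index, actL (ℛz.left w) * actL (actR (ℛz.right w) ⊗ₜ c) := by
  have := LinearMap.congr_fun hmp.actL_mul (h ⊗ₜ (b ⊗ₜ c))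
  simp only [LinearMap.comp_apply, LinearMap.rTensor_tmul, LinearMap.lTensor_tmul,
    LinearMap.mul'_apply, LinearEquiv.coe_coe] at this
  let F := LinearMap.mul' k B ∘ₗ map actL (actL ∘ₗ (TensorProduct.mk k H B).flip c ∘ₗ actR)
  calc actL (h ⊗ₜ (b * c)) = F (comul (h ⊗ₜ[k] b)) := by
        rw [this, comul_tmul, ← (ℛ k h).eq, ← (ℛ k b).eq]
        simp [F, sum_tmul, tmul_sum, map_sum]
    _ = _ := by
        rw [← ℛz.eq, map_sum]
        rfl

theorem matchedPairR_mul_tmul_eq_sum (hmp : MatchedPair k B H actL actR) {g h : H} {b : B}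
    {ν : Type*} {Λ : κ × ν → Type*} (ℛg : Repr k g ι) (ℛh : Repr k h κ) (ℛb : Repr k b ν)
    (ℛz₂ : ∀ w, Repr k ((ℛh.tmul ℛb).right w) (Λ w)) :
    matchedPairR k B H actL actR ((g * h) ⊗ₜ b)
      = ∑ p ∈ ℛg.index, ∑ w ∈ (ℛh.tmul ℛb).index, ∑ v ∈ (ℛz₂ w).index,
          actL (ℛg.left p ⊗ₜ actL ((ℛh.tmul ℛb).left w)) ⊗ₜ[k]
            (actR (ℛg.right p ⊗ₜ actL ((ℛz₂ w).left v)) * actR ((ℛz₂ w).right v)) := by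
  rw [matchedPairR_tmul (ℛg.mul ℛh) ℛb, Repr.mul_index, Finset.sum_product]
  refine Finset.sum_congr rfl fun p _ => ?_
  rw [Repr.tmul_index, Finset.sum_product]
  refine Finset.sum_congr rfl fun i _ => Finset.sum_congr rfl fun j _ => ?_
  rw [Repr.mul_left, Repr.mul_right, hmp.mul_actL, hmp.actR_mul_tmul _ (ℛz₂ (i, j)), tmul_sum]
  rfl

theorem lTensor_mul'_rTensor_matchedPairR_eq_sum (hmp : MatchedPair k B H actL actR)
    {g : H} {z : H ⊗[k] B} {Λ : κ → Type*} (ℛg : Repr k g ι) (ℛz : Repr k z κ)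
    (ℛz₁ : ∀ w, Repr k (ℛz.left w) (Λ w)) :
    LinearMap.lTensor B (LinearMap.mul' k H) (TensorProduct.assoc k B H H
      (LinearMap.rTensor H (matchedPairR k B H actL actR)
        ((TensorProduct.assoc k H B H).symm (g ⊗ₜ matchedPairR k B H actL actR z))))
      = ∑ p ∈ ℛg.index, ∑ w ∈ ℛz.index, ∑ v ∈ (ℛz₁ w).index,
          actL (ℛg.left p ⊗ₜ actL ((ℛz₁ w).left v)) ⊗ₜ[k]
            (actR (ℛg.right p ⊗ₜ actL ((ℛz₁ w).right v)) * actR (ℛz.right w)) := by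
  rw [matchedPairR_apply ℛz, tmul_sum, Finset.sum_comm]
  simp only [map_sum, assoc_symm_tmul, LinearMap.rTensor_tmul]
  refine Finset.sum_congr rfl fun w _ => ?_
  have hR := matchedPairR_tmul (actL := actL) (actR := actR) ℛg
    ((ℛz₁ w).induced hmp.actLCoalgHom)
  simp only [Repr.induced_index, Repr.induced_left, Repr.induced_right, Function.comp_apply,
    coe_actLCoalgHom] at hR
  simp only [hR, sum_tmul, map_sum, assoc_tmul, LinearMap.lTensor_tmul, LinearMap.mul'_apply]

theorem matchedPairR_mul_tmul (hmp : MatchedPair k B H actL actR) (g h : H) (b : B) :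
    matchedPairR k B H actL actR ((g * h) ⊗ₜ b)
      = LinearMap.lTensor B (LinearMap.mul' k H) (TensorProduct.assoc k B H H
        (LinearMap.rTensor H (matchedPairR k B H actL actR)
          ((TensorProduct.assoc k H B H).symm (g ⊗ₜ matchedPairR k B H actL actR (h ⊗ₜ b))))) := by
  set ℛz := (ℛ k h).tmul (ℛ k b)
  rw [hmp.matchedPairR_mul_tmul_eq_sum (ℛ k g) (ℛ k h) (ℛ k b) fun w => ℛ k (ℛz.right w),
    hmp.lTensor_mul'_rTensor_matchedPairR_eq_sum (ℛ k g) ℛz fun w => ℛ k (ℛz.left w)]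
  refine Finset.sum_congr rfl fun p _ => ?_
  exact (sum_apply_tmul_tmul_eq
    (map (actL ∘ₗ TensorProduct.mk k H B ((ℛ k g).left p) ∘ₗ actL)
      (LinearMap.mul' k H ∘ₗ map (actR ∘ₗ TensorProduct.mk k H B ((ℛ k g).right p) ∘ₗ actL) actR))
    ℛz _ _).symm

theorem matchedPairR_tmul_mul_eq_sum (hmp : MatchedPair k B H actL actR) {h : H} {b c : B}
    {ν : Type*} {Λ : ι × κ → Type*} (ℛh : Repr k h ι) (ℛb : Repr k b κ) (ℛc : Repr k c ν)
    (ℛz₁ : ∀ w, Repr k ((ℛh.tmul ℛb).left w) (Λ w)) :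
    matchedPairR k B H actL actR (h ⊗ₜ (b * c))
      = ∑ q ∈ ℛc.index, ∑ w ∈ (ℛh.tmul ℛb).index, ∑ v ∈ (ℛz₁ w).index,
          (actL ((ℛz₁ w).left v) * actL (actR ((ℛz₁ w).right v) ⊗ₜ ℛc.left q)) ⊗ₜ[k]
            actR (actR ((ℛh.tmul ℛb).right w) ⊗ₜ ℛc.right q) := by
  rw [matchedPairR_tmul ℛh (ℛb.mul ℛc)]
  simp only [Repr.mul_index, Repr.tmul_index, Finset.sum_product]
  conv_rhs => rw [Finset.sum_comm]
  refine Finset.sum_congr rfl fun i _ => ?_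
  conv_rhs => rw [Finset.sum_comm]
  refine Finset.sum_congr rfl fun j _ => Finset.sum_congr rfl fun q _ => ?_
  rw [Repr.mul_left, Repr.mul_right, hmp.actL_tmul_mul _ (ℛz₁ (i, j)), hmp.actR_mul', sum_tmul]
  rfl

theorem rTensor_mul'_lTensor_matchedPairR_eq_sum (hmp : MatchedPair k B H actL actR)
    {c : B} {z : H ⊗[k] B} {Λ : κ → Type*} (ℛc : Repr k c ι) (ℛz : Repr k z κ)
    (ℛz₂ : ∀ w, Repr k (ℛz.right w) (Λ w)) :
    LinearMap.rTensor H (LinearMap.mul' k B) ((TensorProduct.assoc k B B H).symm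
      (LinearMap.lTensor B (matchedPairR k B H actL actR)
        (TensorProduct.assoc k B H B (matchedPairR k B H actL actR z ⊗ₜ c))))
      = ∑ q ∈ ℛc.index, ∑ w ∈ ℛz.index, ∑ v ∈ (ℛz₂ w).index,
          (actL (ℛz.left w) * actL (actR ((ℛz₂ w).left v) ⊗ₜ ℛc.left q)) ⊗ₜ[k]
            actR (actR ((ℛz₂ w).right v) ⊗ₜ ℛc.right q) := by
  rw [matchedPairR_apply ℛz, sum_tmul, Finset.sum_comm]
  simp only [map_sum, assoc_tmul, LinearMap.lTensor_tmul]
  refine Finset.sum_congr rfl fun w _ => ?_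
  have hR := matchedPairR_tmul (actL := actL) (actR := actR)
    ((ℛz₂ w).induced hmp.actRCoalgHom) ℛc
  simp only [Repr.induced_index, Repr.induced_left, Repr.induced_right, Function.comp_apply,
    coe_actRCoalgHom] at hR
  simp only [hR, tmul_sum, map_sum, assoc_symm_tmul, LinearMap.rTensor_tmul, LinearMap.mul'_apply]
  exact Finset.sum_comm

theorem matchedPairR_tmul_mul (hmp : MatchedPair k B H actL actR) (h : H) (b c : B) :
    matchedPairR k B H actL actR (h ⊗ₜ (b * c))
      = LinearMap.rTensor H (LinearMap.mul' k B) ((TensorProduct.assoc k B B H).symm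
        (LinearMap.lTensor B (matchedPairR k B H actL actR)
          (TensorProduct.assoc k B H B (matchedPairR k B H actL actR (h ⊗ₜ b) ⊗ₜ c)))) := by
  set ℛz := (ℛ k h).tmul (ℛ k b)
  rw [hmp.matchedPairR_tmul_mul_eq_sum (ℛ k h) (ℛ k b) (ℛ k c) fun w => ℛ k (ℛz.left w),
    hmp.rTensor_mul'_lTensor_matchedPairR_eq_sum (ℛ k c) ℛz fun w => ℛ k (ℛz.right w)]
  refine Finset.sum_congr rfl fun q _ => ?_
  exact sum_apply_tmul_tmul_eq
    (LinearMap.rTensor H (LinearMap.mul' k B) ∘ₗ (TensorProduct.assoc k B B H).symm.toLinearMap ∘ₗ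
      map actL (map (actL ∘ₗ (TensorProduct.mk k H B).flip ((ℛ k c).left q) ∘ₗ actR)
        (actR ∘ₗ (TensorProduct.mk k H B).flip ((ℛ k c).right q) ∘ₗ actR)))
    ℛz _ _

end MatchedPair

/-- For a matched pair `(B, H)` of Hopf algebras, the map
`R(h ⊗ b) = Σ (h₍₁₎ ▷ b₍₁₎) ⊗ (h₍₂₎ ◁ b₍₂₎) : H ⊗ B → B ⊗ H` is quasitriangular and
normal. -/
theorem matchedPairR_quasitriangular_normal
    (k B H : Type) [Field k] [Ring B] [HopfAlgebra k B] [Ring H] [HopfAlgebra k H]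
    (actL : H ⊗[k] B →ₗ[k] B) (actR : H ⊗[k] B →ₗ[k] H)
    (hmp : MatchedPair k B H actL actR) :
    Quasitriangular k B H (matchedPairR k B H actL actR)
    ∧ RNormal k B H (matchedPairR k B H actL actR) := by
  refine ⟨⟨?_, ?_⟩, hmp.matchedPairR_one_tmul, hmp.matchedPairR_tmul_one⟩
  · refine TensorProduct.ext_threefold fun g h b => ?_
    simp only [LinearMap.comp_apply, LinearEquiv.coe_coe, assoc_tmul, LinearMap.lTensor_tmul,
      LinearMap.rTensor_tmul, LinearMap.mul'_apply]
    exact hmp.matchedPairR_mul_tmul g h b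
  · refine TensorProduct.ext_threefold' fun h b c => ?_
    simp only [LinearMap.comp_apply, LinearEquiv.coe_coe, assoc_symm_tmul, LinearMap.lTensor_tmul,
      LinearMap.rTensor_tmul, LinearMap.mul'_apply]
    exact hmp.matchedPairR_tmul_mul h b c
end
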